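/- Let T be a triangulated category, let (U, V) be a stable t-structure in T, and let X be a thick subcategory of T. Then U * X is a triangulated subcategory of T if and only if (X ∩ U, X ∩ V) is a stable t-structure in X. -/

import Mathlib

/-!
If `U * X` is triangulated, an object `x ∈ X` sits in a triangle `u ⟶ x ⟶ v ⟶ u⟦1⟧` with
`u ∈ U`, `v ∈ V`; rotating it shows `v ∈ U * X`, and as `Hom(U, v) = 0` the triangle exhibiting
this splits, so `v` is a summand of an object of `X`. Thickness then puts `v` and `u` in `X`.

Conversely, `X = (X ∩ U) * (X ∩ V)` and associativity of `*` (the octahedral axiom) give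
`U * X = U * (X ∩ V)`. For triangulated `A`, `B` with `Hom(A, B⟦1⟧) = 0` one has `B * A ⊆ A * B`
(the triangles split), and with associativity this makes `A * B` closed under extensions.
-/

namespace Paper

open CategoryTheory Limits Triangulated Pretriangulated ZeroObject

universe w v u

variable {C : Type u} [Category.{v} C] [HasZeroObject C] [Preadditive C] [HasShift C ℤ]
  [∀ n : ℤ, (shiftFunctor C n).Additive] [Pretriangulated C]

/-- The subcategory of extensions `X * Y`: objects `e` admitting a distinguished triangle
`x ⟶ e ⟶ y ⟶ x⟦1⟧` with `x ∈ X` and `y ∈ Y`. -/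
def star (X Y : Set C) : Set C :=
  {e | ∃ (x y : C) (_ : x ∈ X) (_ : y ∈ Y) (f : x ⟶ e) (g : e ⟶ y) (h : y ⟶ x⟦(1 : ℤ)⟧),
    Triangle.mk f g h ∈ distTriang C}

/-- A (strictly full) triangulated subcategory: a class of objects containing `0`, closed
under isomorphisms, suspension, desuspension and extensions. -/
structure IsTriangulatedSubcat (S : Set C) : Prop where
  zero_mem : (0 : C) ∈ S
  mem_of_iso : ∀ {a b : C}, (a ≅ b) → a ∈ S → b ∈ S
  shift_mem : ∀ {a : C}, a ∈ S → a⟦(1 : ℤ)⟧ ∈ S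
  unshift_mem : ∀ {a : C}, a ∈ S → a⟦(-1 : ℤ)⟧ ∈ S
  ext₂ : ∀ {a e b : C} (f : a ⟶ e) (g : e ⟶ b) (h : b ⟶ a⟦(1 : ℤ)⟧),
    (Triangle.mk f g h ∈ distTriang C) → a ∈ S → b ∈ S → e ∈ S

/-- A thick subcategory: a triangulated subcategory closed under direct summands
(equivalently, retracts). -/
structure IsThickSubcat (S : Set C) extends IsTriangulatedSubcat S : Prop where
  mem_of_retract : ∀ {a s : C}, s ∈ S → (∃ (i : a ⟶ s) (p : s ⟶ a), i ≫ p = 𝟙 a) → a ∈ S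

/-- `(U, V)` is a stable t-structure in the (triangulated sub)category whose class of
objects is `S`: both are triangulated subcategories contained in `S`, `Hom(U, V) = 0`
and `U * V = S`. -/
structure IsStableTStructureIn (S U V : Set C) : Prop where
  subsetU : U ⊆ S
  subsetV : V ⊆ S
  triU : IsTriangulatedSubcat U
  triV : IsTriangulatedSubcat V
  hom_zero : ∀ {u v : C}, u ∈ U → v ∈ V → ∀ f : u ⟶ v, f = 0
  star_eq : star U V = S

lemma IsTriangulatedSubcat.shift_all {S : Set C} (hS : IsTriangulatedSubcat S) (a : C) (n : ℤ)
    (ha : a ∈ S) : a⟦n⟧ ∈ S := by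
  induction n using Int.induction_on with
  | zero => exact hS.mem_of_iso ((shiftFunctorZero C ℤ).app a).symm ha
  | succ i hi =>
      exact hS.mem_of_iso ((shiftFunctorAdd' C (i : ℤ) 1 ((i : ℤ) + 1) rfl).app a).symm
        (hS.shift_mem hi)
  | pred i hi =>
      exact hS.mem_of_iso
        ((shiftFunctorAdd' C (-(i : ℤ)) (-1) (-(i : ℤ) - 1) (by ring)).app a).symm
        (hS.unshift_mem hi)

namespace Triangulated

variable (C) in
/-- The December 2024 Mathlib `Triangulated.Subcategory` (removed since), restored verbatim. -/
structure Subcategory where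
  P : C → Prop
  zero' : ∃ (Z : C) (_ : IsZero Z), P Z
  shift (X : C) (n : ℤ) : P X → P (X⟦n⟧)
  ext₂' (T : Triangle C) (_ : T ∈ distTriang C) : P T.obj₁ → P T.obj₃ →
    (∃ (Y : C) (_ : P Y), Nonempty (T.obj₂ ≅ Y))

/-- The old `Triangulated.Subcategory.mk'`. -/
def Subcategory.mk' (P : C → Prop) (zero : P 0)
    (shift : ∀ (X : C) (n : ℤ), P X → P (X⟦n⟧))
    (ext₂ : ∀ (T : Triangle C) (_ : T ∈ distTriang C), P T.obj₁ → P T.obj₃ → P T.obj₂) :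
    Subcategory C where
  P := P
  zero' := ⟨0, isZero_zero _, zero⟩
  shift := shift
  ext₂' T hT h₁ h₃ := ⟨T.obj₂, ext₂ T hT h₁ h₃, ⟨Iso.refl _⟩⟩

/-- The old `Triangulated.Subcategory.W`. -/
def Subcategory.W (S : Subcategory C) : MorphismProperty C := fun X Y f =>
  ∃ (Z : C) (g : Y ⟶ Z) (h : Z ⟶ X⟦(1 : ℤ)⟧) (_ : Triangle.mk f g h ∈ distTriang C), S.P Z

end Triangulated

/-- The Mathlib `Triangulated.Subcategory` associated to a class of objects satisfying
`IsTriangulatedSubcat`. -/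
def IsTriangulatedSubcat.toSubcategory {S : Set C} (hS : IsTriangulatedSubcat S) :
    Triangulated.Subcategory C :=
  Triangulated.Subcategory.mk' (· ∈ S) hS.zero_mem (fun a n ha => hS.shift_all a n ha)
    (fun T hT h₁ h₃ => hS.ext₂ T.mor₁ T.mor₂ T.mor₃ hT h₁ h₃)

lemma IsTriangulatedSubcat.inter {X Y : Set C} (hX : IsTriangulatedSubcat X)
    (hY : IsTriangulatedSubcat Y) : IsTriangulatedSubcat (X ∩ Y) where
  zero_mem := ⟨hX.zero_mem, hY.zero_mem⟩
  mem_of_iso := fun e h => ⟨hX.mem_of_iso e h.1, hY.mem_of_iso e h.2⟩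
  shift_mem := fun h => ⟨hX.shift_mem h.1, hY.shift_mem h.2⟩
  unshift_mem := fun h => ⟨hX.unshift_mem h.1, hY.unshift_mem h.2⟩
  ext₂ := fun f g h hT ha hb => ⟨hX.ext₂ f g h hT ha.1 hb.1, hY.ext₂ f g h hT ha.2 hb.2⟩

/-- The Verdier quotient of `C` by the triangulated subcategory `S`. -/
abbrev VerdierQuotient {S : Set C} (hS : IsTriangulatedSubcat S) : Type _ :=
  hS.toSubcategory.W.Localization

/-- The Verdier quotient functor. -/
noncomputable abbrev Vq {S : Set C} (hS : IsTriangulatedSubcat S) : C ⥤ VerdierQuotient hS :=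
  hS.toSubcategory.W.Q

/-- The essential image of a class of objects under a functor (the closure under
isomorphisms of the image). -/
def QSet {D : Type*} [Category D] (L : C ⥤ D) (S : Set C) : Set D :=
  {d | ∃ s ∈ S, Nonempty (L.obj s ≅ d)}

/-- The right perpendicular class `X^⊥`. -/
def rightPerp (X : Set C) : Set C := {t | ∀ {x : C}, x ∈ X → ∀ f : x ⟶ t, f = 0}

/-- The left perpendicular class `^⊥X`. -/
def leftPerp (X : Set C) : Set C := {t | ∀ {x : C}, x ∈ X → ∀ f : t ⟶ x, f = 0}


section Star

variable {A A' B B' D : Set C}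

lemma star_mono (hA : A ⊆ A') (hB : B ⊆ B') : star A B ⊆ star A' B' := by
  rintro e ⟨a, b, ha, hb, f, g, h, hT⟩
  exact ⟨a, b, hA ha, hB hb, f, g, h, hT⟩

lemma mem_star_of_iso {e e' : C} (i : e ≅ e') (he : e ∈ star A B) : e' ∈ star A B := by
  obtain ⟨a, b, ha, hb, f, g, h, hT⟩ := he
  refine ⟨a, b, ha, hb, f ≫ i.hom, i.inv ≫ g, h, isomorphic_distinguished _ hT _
    (Triangle.isoMk _ _ (Iso.refl _) i.symm (Iso.refl _) ?_ ?_ ?_)⟩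
  · change (f ≫ i.hom) ≫ i.inv = 𝟙 a ≫ f; simp
  · change (i.inv ≫ g) ≫ 𝟙 b = i.inv ≫ g; simp
  · change h ≫ (shiftFunctor C (1 : ℤ)).map (𝟙 a) = 𝟙 b ≫ h; simp

lemma subset_star_left (h0 : (0 : C) ∈ B) : A ⊆ star A B := fun a ha =>
  ⟨a, 0, ha, h0, 𝟙 a, 0, 0, contractible_distinguished a⟩

lemma subset_star_right (h0 : (0 : C) ∈ A) : B ⊆ star A B := fun b hb =>
  ⟨0, b, h0, hb, 0, 𝟙 b, 0, contractible_distinguished₁ b⟩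

lemma biprod_mem_star {a b : C} (ha : a ∈ A) (hb : b ∈ B) : (a ⊞ b : C) ∈ star A B :=
  ⟨a, b, ha, hb, _, _, _, binaryBiproductTriangle_distinguished a b⟩

lemma IsTriangulatedSubcat.star_self_subset (hA : IsTriangulatedSubcat A) : star A A ⊆ A := by
  rintro e ⟨a, a', ha, ha', f, g, h, hT⟩
  exact hA.ext₂ f g h hT ha ha'

lemma shift_mem_star (hA : IsTriangulatedSubcat A) (hB : IsTriangulatedSubcat B)
    {e : C} (he : e ∈ star A B) (n : ℤ) : e⟦n⟧ ∈ star A B := by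
  obtain ⟨a, b, ha, hb, f, g, h, hT⟩ := he
  exact ⟨a⟦n⟧, b⟦n⟧, hA.shift_all a n ha, hB.shift_all b n hb, _, _, _,
    Triangle.shift_distinguished _ hT n⟩

lemma star_swap_subset
    (hAB : ∀ {a b : C}, a ∈ A → b ∈ B → ∀ f : a ⟶ b⟦(1 : ℤ)⟧, f = 0) :
    star B A ⊆ star A B := by
  rintro e ⟨b, a, hb, ha, f, g, h, hT⟩
  obtain ⟨i, -⟩ := exists_iso_binaryBiproduct_of_distTriang _ hT (hAB ha hb h)
  exact mem_star_of_iso (i ≪≫ biprod.braiding b a).symm (biprod_mem_star ha hb)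

lemma star_assoc_subset [IsTriangulated C] : star (star A B) D ⊆ star A (star B D) := by
  rintro e ⟨m, d, ⟨a, b, ha, hb, f, g, h, hT'⟩, hd, i, j, k, hT⟩
  obtain ⟨Z, p, q, hZ⟩ := distinguished_cocone_triangle (f ≫ i)
  exact ⟨a, Z, ha, ⟨b, d, hb, hd, _, _, _, (someOctahedron rfl hT' hT hZ).mem⟩,
    f ≫ i, p, q, hZ⟩

lemma star_assoc_subset_symm [IsTriangulated C] (hA : IsTriangulatedSubcat A)
    (hB : IsTriangulatedSubcat B) : star A (star B D) ⊆ star (star A B) D := by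
  rintro e ⟨a, n, ha, ⟨b, d, hb, hd, f, g, h, hT'⟩, i, j, k, hT⟩
  obtain ⟨Z, p, q, hZ⟩ := distinguished_cocone_triangle (j ≫ g)
  have oct := someOctahedron rfl (rot_of_distTriang _ hT) (rot_of_distTriang _ hT') hZ
  refine ⟨Z⟦(-1 : ℤ)⟧, d, ?_, hd, _, _, _, inv_rot_of_distTriang _ hZ⟩
  exact ⟨a⟦(1 : ℤ)⟧⟦(-1 : ℤ)⟧, b⟦(1 : ℤ)⟧⟦(-1 : ℤ)⟧, hA.unshift_mem (hA.shift_mem ha),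
    hB.unshift_mem (hB.shift_mem hb), _, _, _, Triangle.shift_distinguished _ oct.mem (-1)⟩

lemma isTriangulatedSubcat_star [IsTriangulated C] (hA : IsTriangulatedSubcat A)
    (hB : IsTriangulatedSubcat B)
    (hAB : ∀ {a b : C}, a ∈ A → b ∈ B → ∀ f : a ⟶ b⟦(1 : ℤ)⟧, f = 0) :
    IsTriangulatedSubcat (star A B) where
  zero_mem := subset_star_left hB.zero_mem hA.zero_mem
  mem_of_iso := mem_star_of_iso
  shift_mem he := shift_mem_star hA hB he 1
  unshift_mem he := shift_mem_star hA hB he (-1)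
  ext₂ f g h hT he₁ he₃ := by
    have hext : star (star A B) (star A B) ⊆ star A B := calc
      star (star A B) (star A B) ⊆ star A (star B (star A B)) := star_assoc_subset
      _ ⊆ star A (star (star B A) B) := star_mono subset_rfl (star_assoc_subset_symm hB hA)
      _ ⊆ star A (star (star A B) B) :=
        star_mono subset_rfl (star_mono (star_swap_subset hAB) subset_rfl)
      _ ⊆ star A (star A (star B B)) := star_mono subset_rfl star_assoc_subset
      _ ⊆ star A (star A B) := star_mono subset_rfl (star_mono subset_rfl hB.star_self_subset)
      _ ⊆ star (star A A) B := star_assoc_subset_symm hA hA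
      _ ⊆ star A B := star_mono hA.star_self_subset subset_rfl
    exact hext ⟨_, _, he₁, he₃, f, g, h, hT⟩

end Star

lemma IsThickSubcat.mem_of_mem_star_of_mem_rightPerp {A X : Set C} (hX : IsThickSubcat X)
    {v : C} (hv : v ∈ star A X) (hvA : v ∈ rightPerp A) : v ∈ X := by
  obtain ⟨a, x, ha, hx, f, g, h, hT⟩ := hv
  obtain ⟨p, hp⟩ := Triangle.yoneda_exact₂ _ hT (𝟙 v)
    (by change f ≫ 𝟙 v = 0; rw [Category.comp_id, hvA ha f])
  exact hX.mem_of_retract hx ⟨g, p, hp.symm⟩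

section TStructure

variable {S U V X : Set C}

lemma IsStableTStructureIn.mem_star_inter {x : C} (hUV : IsStableTStructureIn S U V)
    (hX : IsThickSubcat X) (hUX : IsTriangulatedSubcat (star U X)) (hxS : x ∈ S)
    (hx : x ∈ X) : x ∈ star (X ∩ U) (X ∩ V) := by
  obtain ⟨u, v, hu, hv, f, g, h, hT⟩ : x ∈ star U V := hUV.star_eq ▸ hxS
  have hvUX : v ∈ star U X := hUX.ext₂ _ _ _ (rot_of_distTriang _ hT)
    (subset_star_right hUV.triU.zero_mem hx)
    (subset_star_left hX.zero_mem (hUV.triU.shift_mem hu))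
  have hvX : v ∈ X :=
    hX.mem_of_mem_star_of_mem_rightPerp hvUX fun hu' f' => hUV.hom_zero hu' hv f'
  have huX : u ∈ X := hX.ext₂ _ _ _ (inv_rot_of_distTriang _ hT) (hX.unshift_mem hvX) hx
  exact ⟨u, v, ⟨huX, hu⟩, ⟨hvX, hv⟩, f, g, h, hT⟩

lemma IsStableTStructureIn.inter (hUV : IsStableTStructureIn S U V)
    (hX : IsTriangulatedSubcat X) (hXUV : X ⊆ star (X ∩ U) (X ∩ V)) :
    IsStableTStructureIn X (X ∩ U) (X ∩ V) where
  subsetU := Set.inter_subset_left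
  subsetV := Set.inter_subset_left
  triU := hX.inter hUV.triU
  triV := hX.inter hUV.triV
  hom_zero hu hv f := hUV.hom_zero hu.2 hv.2 f
  star_eq := (star_mono Set.inter_subset_left Set.inter_subset_left).trans hX.star_self_subset
    |>.antisymm hXUV

lemma star_eq_star_inter [IsTriangulated C] (hU : IsTriangulatedSubcat U)
    (hXUV : IsStableTStructureIn X (X ∩ U) (X ∩ V)) : star U X = star U (X ∩ V) := by
  refine subset_antisymm ?_ (star_mono subset_rfl Set.inter_subset_left)
  calc star U X = star U (star (X ∩ U) (X ∩ V)) := by rw [hXUV.star_eq]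
    _ ⊆ star (star U (X ∩ U)) (X ∩ V) := star_assoc_subset_symm hU hXUV.triU
    _ ⊆ star U (X ∩ V) :=
      star_mono ((star_mono subset_rfl Set.inter_subset_right).trans hU.star_self_subset) subset_rfl

end TStructure

variable [IsTriangulated C]

/-- Let `(U, V)` be a stable t-structure in `C` and `X` a thick subcategory.  Then
`U * X` is a triangulated subcategory of `C` if and only if `(X ∩ U, X ∩ V)` is a stable
t-structure in `X`. -/
theorem statement10 {U V X : Set C} (hUV : IsStableTStructureIn Set.univ U V)
    (hX : IsThickSubcat X) :
    IsTriangulatedSubcat (star U X) ↔ IsStableTStructureIn X (X ∩ U) (X ∩ V) := by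
  constructor
  · intro hUX
    exact hUV.inter hX.toIsTriangulatedSubcat fun x hx =>
      hUV.mem_star_inter hX hUX (Set.mem_univ x) hx
  · intro hXUV
    rw [star_eq_star_inter hUV.triU hXUV]
    exact isTriangulatedSubcat_star hUV.triU (hX.inter hUV.triV)
      fun ha hb f => hUV.hom_zero ha (hUV.triV.shift_mem hb.2) f

end Paper
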